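/- arXiv:1712.08452 — 4 statements merged into one kernel-verified Lean document; each statement's English description precedes it below -/
import Mathlib

section
/- For any L > 0 there is no Möbius transformation M(z) = (αz + β)/(γz + δ) with αδ − βγ ≠ 0 such that M(ξ) = e^{−iLξ} simultaneously for four distinct complex numbers ξ₁, ξ₂, conj(ξ₁), conj(ξ₂), where ξ₁, ξ₂ are non-real and ξ₂ ∉ {ξ₁, conj(ξ₁)}. -/
open Complex


lemma aux_tanh (t : ℝ) (ht : 0 < t) : Real.sinh t < t * Real.cosh t := by
  have hmono : StrictMonoOn (fun t : ℝ => t * Real.cosh t - Real.sinh t) (Set.Ici 0) := by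
    apply strictMonoOn_of_deriv_pos (convex_Ici 0)
    · exact ((continuous_id.mul Real.continuous_cosh).sub Real.continuous_sinh).continuousOn
    · intro x hx
      rw [interior_Ici] at hx
      have hd : HasDerivAt (fun t : ℝ => t * Real.cosh t - Real.sinh t)
          (1 * Real.cosh x + x * Real.sinh x - Real.cosh x) x :=
        ((hasDerivAt_id x).mul (Real.hasDerivAt_cosh x)).sub (Real.hasDerivAt_sinh x)
      rw [hd.deriv]
      have hx0 : (0:ℝ) < x := hx
      have := Real.sinh_pos_iff.2 hx0
      nlinarith
  have := hmono (Set.self_mem_Ici) (Set.mem_Ici.2 ht.le) ht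
  simpa using this

lemma aux_sinhc_mono (x y : ℝ) (hx : 0 < x) (hxy : x < y) :
    Real.sinh x * y < Real.sinh y * x := by
  have hmono : StrictMonoOn (fun t : ℝ => Real.sinh t / t) (Set.Ioi 0) := by
    apply strictMonoOn_of_deriv_pos (convex_Ioi 0)
    · exact Real.continuous_sinh.continuousOn.div continuousOn_id
        (fun t ht => ne_of_gt ht)
    · intro t ht
      rw [interior_Ioi] at ht
      have ht0 : t ≠ 0 := ne_of_gt ht
      have hd : HasDerivAt (fun t : ℝ => Real.sinh t / t)
          ((Real.cosh t * t - Real.sinh t * 1) / t ^ 2) t :=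
        (Real.hasDerivAt_sinh t).div (hasDerivAt_id t) ht0
      rw [hd.deriv]
      have h1 := aux_tanh t ht
      have h2 : (0:ℝ) < t^2 := by positivity
      apply div_pos _ h2
      nlinarith
  have h := hmono (Set.mem_Ioi.2 hx) (Set.mem_Ioi.2 (hx.trans hxy)) hxy
  have hy : 0 < y := hx.trans hxy
  rw [div_lt_div_iff₀ hx hy] at h
  linarith

lemma aux_abs_le (x y : ℝ) (h : x^2 ≤ y^2) : |x| ≤ |y| := by
  nlinarith [abs_nonneg x, abs_nonneg y, _root_.sq_abs x, _root_.sq_abs y]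

lemma aux_sinh_weak (x y : ℝ) (h0 : 0 ≤ x) (hxy : x ≤ y) :
    Real.sinh x * y ≤ Real.sinh y * x := by
  rcases eq_or_lt_of_le h0 with h|h
  · simp [← h]
  · rcases eq_or_lt_of_le hxy with h'|h'
    · rw [h']
    · exact (aux_sinhc_mono x y h h').le

lemma aux_B (x y : ℝ) (h : x^2 ≤ y^2) : Real.sinh x ^2 * y^2 ≤ Real.sinh y ^2 * x^2 := by
  have hax := aux_abs_le x y h
  have h1 : Real.sinh |x| * |y| ≤ Real.sinh |y| * |x| := aux_sinh_weak _ _ (abs_nonneg x) hax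
  have h2 : 0 ≤ Real.sinh |x| * |y| := by positivity
  have h3 := mul_self_le_mul_self h2 h1
  calc Real.sinh x ^2 * y^2 = (Real.sinh |x| * |y|) * (Real.sinh |x| * |y|) := by
        rw [← Real.abs_sinh]; rw [← _root_.sq_abs (Real.sinh x), ← _root_.sq_abs y]; ring
    _ ≤ (Real.sinh |y| * |x|) * (Real.sinh |y| * |x|) := h3
    _ = Real.sinh y ^2 * x^2 := by
        rw [← Real.abs_sinh]; rw [← _root_.sq_abs (Real.sinh y), ← _root_.sq_abs x]; ring

lemma aux_B' (x y : ℝ) (hx : x ≠ 0) (h : x^2 < y^2) :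
    Real.sinh x ^2 * y^2 < Real.sinh y ^2 * x^2 := by
  have hax : |x| < |y| := by
    nlinarith [abs_nonneg x, abs_nonneg y, _root_.sq_abs x, _root_.sq_abs y]
  have hx0 : 0 < |x| := abs_pos.2 hx
  have h1 : Real.sinh |x| * |y| < Real.sinh |y| * |x| := aux_sinhc_mono _ _ hx0 hax
  have h2 : 0 ≤ Real.sinh |x| * |y| := by positivity
  have h3 := mul_self_lt_mul_self h2 h1
  calc Real.sinh x ^2 * y^2 = (Real.sinh |x| * |y|) * (Real.sinh |x| * |y|) := by
        rw [← Real.abs_sinh]; rw [← _root_.sq_abs (Real.sinh x), ← _root_.sq_abs y]; ring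
    _ < (Real.sinh |y| * |x|) * (Real.sinh |y| * |x|) := h3
    _ = Real.sinh y ^2 * x^2 := by
        rw [← Real.abs_sinh]; rw [← _root_.sq_abs (Real.sinh y), ← _root_.sq_abs x]; ring



lemma aux_prod (p q : ℝ) :
    Real.sinh p * Real.sinh q
      = Real.sinh ((p+q)/2) ^2 - Real.sinh ((p-q)/2) ^2 := by
  have e1 : p = (p+q)/2 + (p-q)/2 := by ring
  have e2 : q = (p+q)/2 - (p-q)/2 := by ring
  rw [show Real.sinh p = Real.sinh ((p+q)/2 + (p-q)/2) by rw [← e1],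
      show Real.sinh q = Real.sinh ((p+q)/2 - (p-q)/2) by rw [← e2],
      Real.sinh_add, Real.sinh_sub]
  have c1 := Real.cosh_sq ((p+q)/2)
  have c2 := Real.cosh_sq ((p-q)/2)
  nlinarith [c1, c2]

lemma coreC (p q : ℝ) (hp : p ≠ 0) (hq : q ≠ 0) :
    4 * Real.sinh ((p+q)/2)^2 ≤ (Real.sinh p / p) * (Real.sinh q / q) * (p+q)^2 := by
  have hpq : p * q ≠ 0 := mul_ne_zero hp hq
  have hprod := aux_prod p q
  set m := (p+q)/2 with hm
  set D := (p-q)/2 with hD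
  have hpqm : p * q = m^2 - D^2 := by rw [hm, hD]; ring
  have h2m : p + q = 2*m := by rw [hm]; ring
  have hdd : (Real.sinh p / p) * (Real.sinh q / q) * (p+q)^2
      = (Real.sinh p * Real.sinh q) * (2*m)^2 / (p*q) := by
    field_simp
    ring
  rw [hdd, hprod]
  rcases lt_or_gt_of_ne hpq with hneg|hpos
  · -- p*q < 0, m^2 < D^2
    have hmD : m^2 ≤ D^2 := by nlinarith
    have hB := aux_B m D hmD
    rw [le_div_iff_of_neg hneg, hpqm]
    nlinarith [hB]
  · have hmD : D^2 ≤ m^2 := by nlinarith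
    have hB := aux_B D m hmD
    rw [le_div_iff₀ hpos, hpqm]
    nlinarith [hB]

lemma coreC' (p q : ℝ) (hp : p ≠ 0) (hq : q ≠ 0) (hne : p ≠ q) (hsum : p + q ≠ 0) :
    4 * Real.sinh ((p+q)/2)^2 < (Real.sinh p / p) * (Real.sinh q / q) * (p+q)^2 := by
  have hpq : p * q ≠ 0 := mul_ne_zero hp hq
  have hprod := aux_prod p q
  set m := (p+q)/2 with hm
  set D := (p-q)/2 with hD
  have hm0 : m ≠ 0 := by rw [hm]; intro h; apply hsum; field_simp at h; linarith
  have hD0 : D ≠ 0 := by rw [hD]; intro h; apply hne; field_simp at h; linarith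
  have hpqm : p * q = m^2 - D^2 := by rw [hm, hD]; ring
  have hdd : (Real.sinh p / p) * (Real.sinh q / q) * (p+q)^2
      = (Real.sinh p * Real.sinh q) * (2*m)^2 / (p*q) := by
    field_simp
    ring
  rw [hdd, hprod]
  rcases lt_or_gt_of_ne hpq with hneg|hpos
  · have hmD : m^2 < D^2 := by nlinarith
    have hB := aux_B' m D hm0 hmD
    rw [lt_div_iff_of_neg hneg, hpqm]
    nlinarith [hB]
  · have hmD : D^2 < m^2 := by nlinarith
    have hB := aux_B' D m hD0 hmD
    rw [lt_div_iff₀ hpos, hpqm]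
    nlinarith [hB]

lemma oneLt (p : ℝ) (hp : p ≠ 0) : 1 < Real.sinh p / p := by
  rcases lt_or_gt_of_ne hp with h|h
  · have h1 : -p < Real.sinh (-p) := Real.self_lt_sinh_iff.2 (by linarith)
    rw [Real.sinh_neg] at h1
    rw [lt_div_iff_of_neg h]
    linarith
  · have h1 : p < Real.sinh p := Real.self_lt_sinh_iff.2 h
    rw [lt_div_iff₀ h]
    linarith

lemma sinsq_lt (t : ℝ) (ht : t ≠ 0) : Real.sin t ^2 < t^2 := by
  have key : ∀ u : ℝ, 0 < u → Real.sin u ^2 < u^2 := by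
    intro u hu
    have h1 : Real.sin u < u := Real.sin_lt hu
    have h2 : -u < Real.sin u := by
      rcases le_or_gt u 1 with h|h
      · have : 0 < Real.sin u := Real.sin_pos_of_pos_of_lt_pi hu
          (lt_of_le_of_lt h (by nlinarith [Real.pi_gt_three]))
        linarith
      · have := Real.neg_one_le_sin u
        linarith
    nlinarith
  rcases lt_or_gt_of_ne ht with h|h
  · have := key (-t) (by linarith)
    rw [Real.sin_neg] at this
    nlinarith
  · exact key t h

lemma sinsq_le (t : ℝ) : Real.sin t ^2 ≤ t^2 := by
  rcases eq_or_ne t 0 with h|h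
  · simp [h]
  · exact (sinsq_lt t h).le

lemma master (p q s : ℝ) (hp : p ≠ 0) (hq : q ≠ 0)
    (hA : ¬(p = q ∧ s = 0)) (hB : ¬(p + q = 0 ∧ s = 0)) :
    4 * Real.sinh ((p+q)/2)^2 + 4 * Real.sin (s/2)^2
      < (Real.sinh p / p) * (Real.sinh q / q) * (s^2 + (p+q)^2) := by
  have hP : 1 < (Real.sinh p / p) * (Real.sinh q / q) := by
    have h1 := oneLt p hp
    have h2 := oneLt q hq
    nlinarith
  have hw := coreC p q hp hq
  have hdist : (Real.sinh p / p) * (Real.sinh q / q) * (s^2 + (p+q)^2)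
      = (Real.sinh p / p) * (Real.sinh q / q) * s^2
        + (Real.sinh p / p) * (Real.sinh q / q) * (p+q)^2 := by ring
  rw [hdist]
  by_cases hs : s = 0
  · subst hs
    obtain ⟨hne, hsum⟩ : p ≠ q ∧ p + q ≠ 0 := by
      constructor
      · intro h; exact hA ⟨h, rfl⟩
      · intro h; exact hB ⟨h, rfl⟩
    have := coreC' p q hp hq hne hsum
    have h0 : Real.sin ((0:ℝ)/2) = 0 := by norm_num
    rw [h0]
    nlinarith [this]
  · have h1 : 4 * Real.sin (s/2)^2 < (Real.sinh p / p) * (Real.sinh q / q) * s^2 := by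
      have h2 : 4 * Real.sin (s/2)^2 ≤ s^2 := by
        have := sinsq_le (s/2)
        nlinarith
      have h3 : 0 < s^2 := by positivity
      nlinarith
    linarith

lemma realNe (p q s : ℝ) (hp : p ≠ 0) (hq : q ≠ 0)
    (hA : ¬(p = q ∧ s = 0)) (hB : ¬(p + q = 0 ∧ s = 0)) :
    (Real.exp (2*p) - 1) * (Real.exp (2*q) - 1) * (s^2 + (p+q)^2)
      ≠ 4*(p*q) * (Real.exp (2*(p+q)) - 2*Real.exp (p+q) * Real.cos s + 1) := by
  intro hE
  have e1 : ∀ x : ℝ, Real.exp (2*x) - 1 = 2 * Real.exp x * Real.sinh x := by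
    intro x
    have h1 : Real.exp x * Real.exp x = Real.exp (2*x) := by
      rw [← Real.exp_add]; ring_nf
    have h2 : Real.exp x * Real.exp (-x) = 1 := by
      rw [← Real.exp_add]; simp
    rw [Real.sinh_eq]
    linarith
  have e3 : Real.exp (2*(p+q)) - 2*Real.exp (p+q) * Real.cos s + 1
      = Real.exp (p+q) * (4 * Real.sinh ((p+q)/2)^2 + 4 * Real.sin (s/2)^2) := by
    have h1 : Real.exp ((p+q)/2) * Real.exp ((p+q)/2) = Real.exp (p+q) := by
      rw [← Real.exp_add]; ring_nf
    have h2 : Real.exp ((p+q)/2) * Real.exp (-((p+q)/2)) = 1 := by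
      rw [← Real.exp_add]; simp
    have hcosh : Real.exp (p+q) + Real.exp (-(p+q)) = 2 + 4 * Real.sinh ((p+q)/2)^2 := by
      have hs := Real.sinh_eq ((p+q)/2)
      have h3 : Real.exp (-((p+q)/2)) * Real.exp (-((p+q)/2)) = Real.exp (-(p+q)) := by
        rw [← Real.exp_add]; ring_nf
      linear_combination (-1)*h1 - h3 + 2*h2 + (-4*Real.sinh ((p+q)/2) - 2*(Real.exp ((p+q)/2) - Real.exp (-((p+q)/2)))) * hs
    have hcos : Real.cos s = 1 - 2 * Real.sin (s/2)^2 := by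
      have hc := Real.cos_two_mul (s/2)
      rw [show (2:ℝ)*(s/2) = s by ring] at hc
      have hpyth := Real.sin_sq_add_cos_sq (s/2)
      linarith
    have h4 : Real.exp (p+q) * Real.exp (-(p+q)) = 1 := by
      rw [← Real.exp_add, add_neg_cancel, Real.exp_zero]
    have h5 : Real.exp (p+q) * Real.exp (p+q) = Real.exp (2*(p+q)) := by
      rw [← Real.exp_add]; ring_nf
    rw [hcos]
    nlinarith [hcosh, h4, h5]
  rw [e1 p, e1 q, e3] at hE
  have hept : Real.exp p * Real.exp q = Real.exp (p+q) := (Real.exp_add p q).symm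
  have hexp0 : Real.exp (p+q) ≠ 0 := Real.exp_ne_zero _
  have hcore : Real.sinh p * Real.sinh q * (s^2+(p+q)^2)
      = (p*q) * (4 * Real.sinh ((p+q)/2)^2 + 4 * Real.sin (s/2)^2) := by
    apply mul_left_cancel₀ (show (4:ℝ) * Real.exp (p+q) ≠ 0 by positivity)
    linear_combination hE - (4 * (Real.sinh p * Real.sinh q * (s^2+(p+q)^2))) * hept
  have hfinal : (Real.sinh p / p) * (Real.sinh q / q) * (s^2 + (p+q)^2)
      = 4 * Real.sinh ((p+q)/2)^2 + 4 * Real.sin (s/2)^2 := by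
    field_simp
    linear_combination hcore
  exact absurd hfinal.symm (ne_of_lt (master p q s hp hq hA hB))

lemma nsq (z : ℂ) : Complex.normSq (Complex.exp z - 1)
    = Real.exp (2*z.re) - 2*Real.exp z.re*Real.cos z.im + 1 := by
  rw [Complex.normSq_apply, Complex.sub_re, Complex.sub_im, Complex.exp_re, Complex.exp_im]
  have h := Real.sin_sq_add_cos_sq z.im
  have he : Real.exp z.re * Real.exp z.re = Real.exp (2*z.re) := by
    rw [← Real.exp_add]; ring_nf
  simp only [Complex.one_re, Complex.one_im]
  nlinarith [h, he]


lemma crred (w₁ w₂ w₃ w₄ c₁ c₂ X Y : ℂ) (h3 : w₃ * c₁ = 1) (h4 : w₄ * c₂ = 1)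
    (hCR : (w₁-w₃)*(w₂-w₄)*Y = X*((w₁-w₄)*(w₂-w₃))) :
    (w₁*c₁-1)*(w₂*c₂-1)*Y = X*((w₁*c₂-1)*(w₂*c₁-1)) := by
  linear_combination (c₁*c₂)*hCR + (Y*(w₂*c₂ - w₄*c₂) - X*(w₁*c₂-1) + X*(w₄*c₂-1))*h3
    + (Y*(w₁*c₁-1) - X*(w₂*c₁-1))*h4

lemma pairid (α β γ δ x y u v : ℂ) (hx : α*x + β = u * (γ*x+δ)) (hy : α*y + β = v * (γ*y+δ)) :
    (u - v) * ((γ*x+δ)*(γ*y+δ)) = (α*δ - β*γ) * (x - y) := by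
  linear_combination (γ*x+δ)*hy - (γ*y+δ)*hx

/-- For any `L > 0` there is no Möbius transformation `M(z) = (αz+β)/(γz+δ)`
(`αδ - βγ ≠ 0`) with `M(ξ) = e^{-iLξ}` at the four pairwise distinct points
`ξ₁, ξ₂, conj ξ₁, conj ξ₂`, where `ξ₁, ξ₂` are non-real and
`ξ₂ ∉ {ξ₁, conj ξ₁}`. -/
theorem stmt6 (L : ℝ) (hL : 0 < L) (ξ₁ ξ₂ : ℂ)
    (h1 : ξ₁.im ≠ 0) (h2 : ξ₂.im ≠ 0)
    (h12 : ξ₂ ≠ ξ₁) (h12' : ξ₂ ≠ (starRingEnd ℂ) ξ₁) :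
    ¬ ∃ α β γ δ : ℂ, α * δ - β * γ ≠ 0 ∧
      ∀ ξ ∈ ({ξ₁, ξ₂, (starRingEnd ℂ) ξ₁, (starRingEnd ℂ) ξ₂} : Set ℂ),
        γ * ξ + δ ≠ 0 ∧
        (α * ξ + β) / (γ * ξ + δ) = Complex.exp (-Complex.I * L * ξ) := by
  rintro ⟨α, β, γ, δ, hdet, hM⟩
  obtain ⟨hd₁, he₁⟩ := hM ξ₁ (by simp)
  obtain ⟨hd₂, he₂⟩ := hM ξ₂ (by simp)
  obtain ⟨hd₃, he₃⟩ := hM ((starRingEnd ℂ) ξ₁) (by simp)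
  obtain ⟨hd₄, he₄⟩ := hM ((starRingEnd ℂ) ξ₂) (by simp)
  set ξ₃ := (starRingEnd ℂ) ξ₁ with hξ₃
  set ξ₄ := (starRingEnd ℂ) ξ₂ with hξ₄
  set w₁ := Complex.exp (-Complex.I * L * ξ₁) with hw₁
  set w₂ := Complex.exp (-Complex.I * L * ξ₂) with hw₂
  set w₃ := Complex.exp (-Complex.I * L * ξ₃) with hw₃
  set w₄ := Complex.exp (-Complex.I * L * ξ₄) with hw₄
  have e₁ : α*ξ₁ + β = w₁ * (γ*ξ₁+δ) := by rw [← he₁, div_mul_cancel₀ _ hd₁]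
  have e₂ : α*ξ₂ + β = w₂ * (γ*ξ₂+δ) := by rw [← he₂, div_mul_cancel₀ _ hd₂]
  have e₃ : α*ξ₃ + β = w₃ * (γ*ξ₃+δ) := by rw [← he₃, div_mul_cancel₀ _ hd₃]
  have e₄ : α*ξ₄ + β = w₄ * (γ*ξ₄+δ) := by rw [← he₄, div_mul_cancel₀ _ hd₄]
  have h13 := pairid α β γ δ ξ₁ ξ₃ w₁ w₃ e₁ e₃
  have h24 := pairid α β γ δ ξ₂ ξ₄ w₂ w₄ e₂ e₄
  have h14 := pairid α β γ δ ξ₁ ξ₄ w₁ w₄ e₁ e₄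
  have h23 := pairid α β γ δ ξ₂ ξ₃ w₂ w₃ e₂ e₃
  have hD : (γ*ξ₁+δ)*(γ*ξ₂+δ)*((γ*ξ₃+δ)*(γ*ξ₄+δ)) ≠ 0 :=
    mul_ne_zero (mul_ne_zero hd₁ hd₂) (mul_ne_zero hd₃ hd₄)
  have P1 : (w₁-w₃)*(w₂-w₄)*((γ*ξ₁+δ)*(γ*ξ₂+δ)*((γ*ξ₃+δ)*(γ*ξ₄+δ)))
      = (α*δ-β*γ)^2*((ξ₁-ξ₃)*(ξ₂-ξ₄)) := by
    linear_combination ((w₂-w₄)*((γ*ξ₂+δ)*(γ*ξ₄+δ)))*h13 + ((α*δ-β*γ)*(ξ₁-ξ₃))*h24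
  have P2 : (w₁-w₄)*(w₂-w₃)*((γ*ξ₁+δ)*(γ*ξ₂+δ)*((γ*ξ₃+δ)*(γ*ξ₄+δ)))
      = (α*δ-β*γ)^2*((ξ₁-ξ₄)*(ξ₂-ξ₃)) := by
    linear_combination ((w₂-w₃)*((γ*ξ₂+δ)*(γ*ξ₃+δ)))*h14 + ((α*δ-β*γ)*(ξ₁-ξ₄))*h23
  have hCR : (w₁-w₃)*(w₂-w₄)*((ξ₁-ξ₄)*(ξ₂-ξ₃)) = ((ξ₁-ξ₃)*(ξ₂-ξ₄))*((w₁-w₄)*(w₂-w₃)) := by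
    apply mul_right_cancel₀ hD
    linear_combination ((ξ₁-ξ₄)*(ξ₂-ξ₃))*P1 - ((ξ₁-ξ₃)*(ξ₂-ξ₄))*P2
  have hc3 : w₃ * (starRingEnd ℂ) w₁ = 1 := by
    rw [hw₃, hw₁, ← Complex.exp_conj, ← Complex.exp_add,
      show -Complex.I * (L:ℂ) * ξ₃ + (starRingEnd ℂ) (-Complex.I * (L:ℂ) * ξ₁) = 0 by
        rw [hξ₃]; simp [map_mul, Complex.conj_ofReal]]
    exact Complex.exp_zero
  have hc4 : w₄ * (starRingEnd ℂ) w₂ = 1 := by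
    rw [hw₄, hw₂, ← Complex.exp_conj, ← Complex.exp_add,
      show -Complex.I * (L:ℂ) * ξ₄ + (starRingEnd ℂ) (-Complex.I * (L:ℂ) * ξ₂) = 0 by
        rw [hξ₄]; simp [map_mul, Complex.conj_ofReal]]
    exact Complex.exp_zero
  have CR2 := crred w₁ w₂ w₃ w₄ ((starRingEnd ℂ) w₁) ((starRingEnd ℂ) w₂)
    ((ξ₁-ξ₃)*(ξ₂-ξ₄)) ((ξ₁-ξ₄)*(ξ₂-ξ₃)) hc3 hc4 hCR
  -- identity A1/A2
  have A1 : w₁ * (starRingEnd ℂ) w₁ = ((Real.exp (2*(L*ξ₁.im)) : ℝ) : ℂ) := by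
    rw [hw₁, ← Complex.exp_conj, ← Complex.exp_add, Complex.add_conj, ← Complex.ofReal_exp]
    congr 1
    simp
  have A2 : w₂ * (starRingEnd ℂ) w₂ = ((Real.exp (2*(L*ξ₂.im)) : ℝ) : ℂ) := by
    rw [hw₂, ← Complex.exp_conj, ← Complex.exp_add, Complex.add_conj, ← Complex.ofReal_exp]
    congr 1
    simp
  set z₀ := -Complex.I * (L:ℂ) * ξ₁ + (starRingEnd ℂ) (-Complex.I * (L:ℂ) * ξ₂) with hz₀
  have A3 : (w₁ * (starRingEnd ℂ) w₂ - 1) * (w₂ * (starRingEnd ℂ) w₁ - 1)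
      = ((Real.exp (2*(L*ξ₁.im + L*ξ₂.im))
          - 2*Real.exp (L*ξ₁.im + L*ξ₂.im)*Real.cos (L*(ξ₁.re-ξ₂.re)) + 1 : ℝ) : ℂ) := by
    have hza : w₁ * (starRingEnd ℂ) w₂ = Complex.exp z₀ := by
      rw [hw₁, hw₂, ← Complex.exp_conj, ← Complex.exp_add]
    have hzb : w₂ * (starRingEnd ℂ) w₁ = Complex.exp ((starRingEnd ℂ) z₀) := by
      rw [hw₁, hw₂, ← Complex.exp_conj, ← Complex.exp_add, hz₀, map_add, Complex.conj_conj,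
        add_comm]
    have hzc : Complex.exp ((starRingEnd ℂ) z₀) - 1 = (starRingEnd ℂ) (Complex.exp z₀ - 1) := by
      rw [map_sub, map_one, ← Complex.exp_conj]
    rw [hza, hzb, hzc, Complex.mul_conj, nsq z₀]
    have hre : z₀.re = L*ξ₁.im + L*ξ₂.im := by
      rw [hz₀]; simp
    have him : z₀.im = -(L*(ξ₁.re - ξ₂.re)) := by
      rw [hz₀]; simp; ring
    rw [hre, him, Real.cos_neg]
  have A4 : (ξ₁ - ξ₃)*(ξ₂ - ξ₄) = ((-(4*(ξ₁.im*ξ₂.im)) : ℝ) : ℂ) := by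
    rw [hξ₃, hξ₄, Complex.sub_conj, Complex.sub_conj]
    push_cast
    linear_combination (4*(ξ₁.im:ℂ)*(ξ₂.im:ℂ)) * Complex.I_sq
  have A5 : (ξ₁ - ξ₄)*(ξ₂ - ξ₃) = ((-((ξ₁.re-ξ₂.re)^2 + (ξ₁.im+ξ₂.im)^2) : ℝ) : ℂ) := by
    have h5a : (ξ₁ - ξ₄)*(ξ₂ - ξ₃) = -((ξ₁ - ξ₄) * (starRingEnd ℂ) (ξ₁ - ξ₄)) := by
      rw [hξ₃, hξ₄, map_sub, Complex.conj_conj]; ring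
    rw [h5a, Complex.mul_conj]
    rw [hξ₄]
    push_cast
    simp [Complex.normSq_apply]
    ring
  rw [A1, A2, A3, A4, A5] at CR2
  have R : (Real.exp (2*(L*ξ₁.im)) - 1) * (Real.exp (2*(L*ξ₂.im)) - 1)
        * (-((ξ₁.re-ξ₂.re)^2 + (ξ₁.im+ξ₂.im)^2))
      = (-(4*(ξ₁.im*ξ₂.im))) * (Real.exp (2*(L*ξ₁.im + L*ξ₂.im))
          - 2*Real.exp (L*ξ₁.im + L*ξ₂.im)*Real.cos (L*(ξ₁.re-ξ₂.re)) + 1) := by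
    exact_mod_cast CR2
  have hL0 : L ≠ 0 := ne_of_gt hL
  refine realNe (L*ξ₁.im) (L*ξ₂.im) (L*(ξ₁.re-ξ₂.re)) (mul_ne_zero hL0 h1)
    (mul_ne_zero hL0 h2) ?_ ?_ ?_
  · rintro ⟨u1, u2⟩
    apply h12
    apply Complex.ext
    · have := mul_left_cancel₀ hL0 (u2.trans (mul_zero L).symm)
      linarith [this]
    · have := mul_left_cancel₀ hL0 u1
      linarith [this]
  · rintro ⟨u1, u2⟩
    apply h12'
    apply Complex.ext
    · have := mul_left_cancel₀ hL0 (u2.trans (mul_zero L).symm)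
      rw [Complex.conj_re]
      linarith [this]
    · have : L * (ξ₁.im + ξ₂.im) = L * 0 := by rw [mul_zero]; linarith [u1]
      have := mul_left_cancel₀ hL0 this
      rw [Complex.conj_im]
      linarith [this]
  · linear_combination (-(L^2)) * R
end

section
/- Suppose λ ∈ ℂ and φ ∈ H^5(0, L) ∩ H²₀(0, L) is a nontrivial solution of λφ + φ' − aφ''' + bφ''''' = 0 on (0, L) with φ(0) = φ(L) = φ'(0) = φ'(L) = φ''(0) = φ''(L) = 0, where a, b > 0. Then λ is purely imaginary. (This follows by multiplying the equation by the conjugate of φ, integrating over [0, L], and integrating by parts using the boundary conditions.) -/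
/-!
Pairing the equation with `φ` in the real inner product `⟪z, w⟫ = Re (conj z * w)` of `ℂ` gives
`Re λ ‖φ‖² = -(⟪φ, φ'⟫ - a ⟪φ, φ'''⟫ + b ⟪φ, φ⁽⁵⁾⟫)`. Each `⟪u, u⁽²ᵏ⁺¹⁾⟫` has an explicit primitive
built from `u, …, u⁽ᵏ⁾` by integrating by parts, so its integral vanishes once these derivatives
vanish at both endpoints. Hence `Re λ ∫ ‖φ‖² = 0`, and `∫ ‖φ‖² > 0` for `φ ≠ 0`.
-/

open Complex

open scoped RealInnerProductSpace

section

variable {E : Type*} [NormedAddCommGroup E] [InnerProductSpace ℝ E]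

theorem ContDiff.hasDerivAt_iteratedDeriv {N : WithTop ℕ∞} {u : ℝ → E} (hu : ContDiff ℝ N u)
    {n : ℕ} (hn : n < N) (x : ℝ) :
    HasDerivAt (iteratedDeriv n u) (iteratedDeriv (n + 1) u x) x := by
  rw [iteratedDeriv_succ]
  exact (hu.differentiable_iteratedDeriv n hn x).hasDerivAt

/-- A primitive of `x ↦ ⟪u x, u⁽²ᵏ⁺¹⁾ x⟫`; the recursion is one integration by parts:
`⟪u, u⁽²ᵏ⁺³⁾⟫ = ⟪u, u⁽²ᵏ⁺²⁾⟫' - ⟪u', (u')⁽²ᵏ⁺¹⁾⟫`. -/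
noncomputable def innerOddDerivPrimitive : ℕ → (ℝ → E) → ℝ → ℝ
  | 0, u, x => ‖u x‖ ^ 2 / 2
  | k + 1, u, x => ⟪u x, iteratedDeriv (2 * k + 2) u x⟫ - innerOddDerivPrimitive k (deriv u) x

theorem hasDerivAt_innerOddDerivPrimitive (k : ℕ) {u : ℝ → E}
    (hu : ContDiff ℝ (2 * k + 1 : ℕ) u) (x : ℝ) :
    HasDerivAt (innerOddDerivPrimitive k u) ⟪u x, iteratedDeriv (2 * k + 1) u x⟫ x := by
  induction k generalizing u with
  | zero =>
    have hu' := hu.hasDerivAt_iteratedDeriv (n := 0) (by norm_num) x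
    simp only [iteratedDeriv_zero] at hu'
    have h := (hu'.inner ℝ hu').div_const 2
    simp only [real_inner_self_eq_norm_sq, real_inner_comm (u x)] at h
    exact h.congr_deriv (by ring)
  | succ k ih =>
    have hu₀ := hu.hasDerivAt_iteratedDeriv (n := 0) (by norm_cast; omega) x
    have hu₂ := hu.hasDerivAt_iteratedDeriv (n := 2 * k + 2) (by norm_cast; omega) x
    have hdu : ContDiff ℝ (2 * k + 1 : ℕ) (deriv u) :=
      (hu.of_le (m := ((2 * k + 1 : ℕ) : WithTop ℕ∞) + 1) (by norm_cast; omega)).deriv'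
    have h := (hu₀.inner ℝ hu₂).sub (ih hdu)
    simp only [iteratedDeriv_zero, zero_add, iteratedDeriv_one, ← iteratedDeriv_succ'] at h
    exact h.congr_deriv (by ring_nf)

theorem innerOddDerivPrimitive_eq_zero (k : ℕ) {u : ℝ → E} {x : ℝ}
    (hu : ∀ j ≤ k, iteratedDeriv j u x = 0) : innerOddDerivPrimitive k u x = 0 := by
  induction k generalizing u with
  | zero => simpa [innerOddDerivPrimitive] using hu 0 le_rfl
  | succ k ih =>
    have hu₀ : u x = 0 := by simpa using hu 0 (Nat.zero_le _)
    have hdu : ∀ j ≤ k, iteratedDeriv j (deriv u) x = 0 := fun j hj => by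
      rw [← iteratedDeriv_succ']
      exact hu (j + 1) (by omega)
    simp [innerOddDerivPrimitive, hu₀, ih hdu]

theorem integral_inner_iteratedDeriv_odd_eq_zero (k : ℕ) {u : ℝ → E}
    (hu : ContDiff ℝ (2 * k + 1 : ℕ) u) {a b : ℝ}
    (ha : ∀ j ≤ k, iteratedDeriv j u a = 0) (hb : ∀ j ≤ k, iteratedDeriv j u b = 0) :
    ∫ x in a..b, ⟪u x, iteratedDeriv (2 * k + 1) u x⟫ = 0 := by
  have hcont : Continuous fun x => ⟪u x, iteratedDeriv (2 * k + 1) u x⟫ :=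
    hu.continuous.inner (hu.continuous_iteratedDeriv _ le_rfl)
  rw [intervalIntegral.integral_eq_sub_of_hasDerivAt
    (fun x _ => hasDerivAt_innerOddDerivPrimitive k hu x) (hcont.intervalIntegrable a b),
    innerOddDerivPrimitive_eq_zero k ha, innerOddDerivPrimitive_eq_zero k hb, sub_zero]

end

theorem Complex.real_inner_mul_self_right (c z : ℂ) : ⟪z, c * z⟫ = c.re * ‖z‖ ^ 2 := by
  rw [Complex.inner, mul_assoc, mul_conj, Complex.sq_norm, re_mul_ofReal]

open intervalIntegral in
theorem re_mul_integral_sq_norm_eq_zero_of_kawahara (a b : ℝ) {x₀ x₁ : ℝ} (hx : x₀ ≤ x₁)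
    {lam : ℂ} {φ : ℝ → ℂ} (hφ : ContDiff ℝ 5 φ)
    (heq : ∀ x ∈ Set.Icc x₀ x₁, lam * φ x + deriv φ x - (a : ℂ) * iteratedDeriv 3 φ x
      + (b : ℂ) * iteratedDeriv 5 φ x = 0)
    (h₀ : ∀ j ≤ 2, iteratedDeriv j φ x₀ = 0) (h₁ : ∀ j ≤ 2, iteratedDeriv j φ x₁ = 0) :
    lam.re * ∫ x in x₀..x₁, ‖φ x‖ ^ 2 = 0 := by
  have hpt : ∀ x ∈ Set.uIcc x₀ x₁, lam.re * ‖φ x‖ ^ 2 = -(⟪φ x, iteratedDeriv 1 φ x⟫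
      - a * ⟪φ x, iteratedDeriv 3 φ x⟫ + b * ⟪φ x, iteratedDeriv 5 φ x⟫) := by
    intro x hx'
    have h := congrArg (⟪φ x, ·⟫) (heq x (Set.uIcc_of_le hx ▸ hx'))
    simp only [inner_add_right, inner_sub_right, inner_zero_right, ← Complex.real_smul,
      real_inner_smul_right, Complex.real_inner_mul_self_right, ← iteratedDeriv_one] at h
    linear_combination h
  have hint (n : ℕ) (hn : n ≤ 5) :
      IntervalIntegrable (fun x => ⟪φ x, iteratedDeriv n φ x⟫) MeasureTheory.volume x₀ x₁ :=
    (hφ.continuous.inner (hφ.continuous_iteratedDeriv n (mod_cast hn))).intervalIntegrable _ _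
  have hskew (k : ℕ) (hk : k ≤ 2) : ∫ x in x₀..x₁, ⟪φ x, iteratedDeriv (2 * k + 1) φ x⟫ = 0 :=
    integral_inner_iteratedDeriv_odd_eq_zero k (hφ.of_le (by norm_cast; omega))
      (fun j hj => h₀ j (hj.trans hk)) (fun j hj => h₁ j (hj.trans hk))
  have hint₁ := hint 1 (by norm_num)
  have hint₃ := (hint 3 (by norm_num)).const_mul a
  rw [← integral_const_mul, integral_congr hpt, integral_neg,
    integral_add (hint₁.sub hint₃) ((hint 5 (by norm_num)).const_mul b), integral_sub hint₁ hint₃,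
    integral_const_mul, integral_const_mul, hskew 0 (by norm_num), hskew 1 (by norm_num),
    hskew 2 (by norm_num)]
  ring

theorem stmt9_general (a b L : ℝ) (hL : 0 < L)
    (lam : ℂ) (φ : ℝ → ℂ) (hφ : ContDiff ℝ 5 φ)
    (heq : ∀ x ∈ Set.Icc (0 : ℝ) L,
      lam * φ x + deriv φ x - (a : ℂ) * iteratedDeriv 3 φ x
        + (b : ℂ) * iteratedDeriv 5 φ x = 0)
    (hb0 : φ 0 = 0) (hbL : φ L = 0)
    (hb0' : deriv φ 0 = 0) (hbL' : deriv φ L = 0)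
    (hb0'' : iteratedDeriv 2 φ 0 = 0) (hbL'' : iteratedDeriv 2 φ L = 0)
    (hnt : ∃ x ∈ Set.Icc (0 : ℝ) L, φ x ≠ 0) :
    lam.re = 0 := by
  have hmass := re_mul_integral_sq_norm_eq_zero_of_kawahara a b hL.le hφ heq
    (fun j hj => by interval_cases j <;> simpa) (fun j hj => by interval_cases j <;> simpa)
  obtain ⟨x₀, hx₀, hφx₀⟩ := hnt
  have hpos : 0 < ∫ x in (0 : ℝ)..L, ‖φ x‖ ^ 2 :=
    intervalIntegral.integral_pos hL (hφ.continuous.norm.pow 2).continuousOn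
      (fun x _ => by positivity) ⟨x₀, hx₀, by positivity⟩
  exact (mul_eq_zero.mp hmass).resolve_right hpos.ne'

/-- If `φ` is a nontrivial smooth solution on `[0,L]` of
`λφ + φ' - aφ''' + bφ''''' = 0` with `φ = φ' = φ'' = 0` at both endpoints,
then `λ` is purely imaginary. -/
theorem stmt9 (a b L : ℝ) (ha : 0 < a) (hb : 0 < b) (hL : 0 < L)
    (lam : ℂ) (φ : ℝ → ℂ) (hφ : ContDiff ℝ 5 φ)
    (heq : ∀ x ∈ Set.Icc (0 : ℝ) L,
      lam * φ x + deriv φ x - (a : ℂ) * iteratedDeriv 3 φ x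
        + (b : ℂ) * iteratedDeriv 5 φ x = 0)
    (hb0 : φ 0 = 0) (hbL : φ L = 0)
    (hb0' : deriv φ 0 = 0) (hbL' : deriv φ L = 0)
    (hb0'' : iteratedDeriv 2 φ 0 = 0) (hbL'' : iteratedDeriv 2 φ L = 0)
    (hnt : ∃ x ∈ Set.Icc (0 : ℝ) L, φ x ≠ 0) :
    lam.re = 0 :=
  stmt9_general a b L hL lam φ hφ heq hb0 hbL hb0' hbL' hb0'' hbL'' hnt
end

section
/- Let a, b > 0, α₁ ≥ 0, α₂ ≥ 0. For smooth functions η, u : [0, L] → ℝ satisfying the boundary conditions η(0) = η(L) = η_x(0) = η_x(L) = 0, u(0) = u(L) = u_x(0) = u_x(L) = 0, u_xx(0) + α₁ η_xx(0) = 0, u_xx(L) − α₂ η_xx(L) = 0, the operator A(η, u) = (−u_x + a u_xxx − b u_xxxxx, −η_x + a η_xxx − b η_xxxxx) satisfies ∫₀^L [η · (first component of A(η,u)) + u · (second component of A(η,u))] dx = −α₂ b η_xx(L)² − α₁ b η_xx(0)² ≤ 0. -/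
private lemma hasDerivAt_iteratedDeriv {f : ℝ → ℝ} (hf : ContDiff ℝ (⊤ : ℕ∞) f) (n : ℕ) (x : ℝ) :
    HasDerivAt (iteratedDeriv n f) (iteratedDeriv (n + 1) f x) x := by
  have hd : DifferentiableAt ℝ (iteratedDeriv n f) x :=
    ((hf.differentiable_iteratedDeriv n (by exact WithTop.coe_lt_coe.mpr (ENat.coe_lt_top n))) x)
  have := hd.hasDerivAt
  rwa [← iteratedDeriv_succ] at this

/-- Dissipativity identity for the linearized fifth-order Boussinesq operator:
for smooth `η, u` satisfying the homogeneous boundary conditions,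
`∫₀ᴸ [η·(first comp of A(η,u)) + u·(second comp of A(η,u))] dx
  = -α₂ b η_xx(L)² - α₁ b η_xx(0)² ≤ 0`. -/
theorem stmt10 (a b L α₁ α₂ : ℝ) (ha : 0 < a) (hb : 0 < b) (hL : 0 < L)
    (hα₁ : 0 ≤ α₁) (hα₂ : 0 ≤ α₂)
    (η u : ℝ → ℝ) (hη : ContDiff ℝ (⊤ : ℕ∞) η) (hu : ContDiff ℝ (⊤ : ℕ∞) u)
    (hη0 : η 0 = 0) (hηL : η L = 0) (hη0' : deriv η 0 = 0) (hηL' : deriv η L = 0)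
    (hu0 : u 0 = 0) (huL : u L = 0) (hu0' : deriv u 0 = 0) (huL' : deriv u L = 0)
    (hbc0 : iteratedDeriv 2 u 0 + α₁ * iteratedDeriv 2 η 0 = 0)
    (hbcL : iteratedDeriv 2 u L - α₂ * iteratedDeriv 2 η L = 0) :
    (∫ x in (0 : ℝ)..L,
        (η x * (-(deriv u x) + a * iteratedDeriv 3 u x - b * iteratedDeriv 5 u x)
          + u x * (-(deriv η x) + a * iteratedDeriv 3 η x - b * iteratedDeriv 5 η x)))
      = -α₂ * b * (iteratedDeriv 2 η L) ^ 2 - α₁ * b * (iteratedDeriv 2 η 0) ^ 2 ∧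
    -α₂ * b * (iteratedDeriv 2 η L) ^ 2 - α₁ * b * (iteratedDeriv 2 η 0) ^ 2 ≤ 0 := by
  set F : ℝ → ℝ := fun x =>
    -(η x * u x)
    + a * (η x * iteratedDeriv 2 u x + u x * iteratedDeriv 2 η x
        - iteratedDeriv 1 η x * iteratedDeriv 1 u x)
    - b * (η x * iteratedDeriv 4 u x + u x * iteratedDeriv 4 η x
        - iteratedDeriv 1 η x * iteratedDeriv 3 u x
        - iteratedDeriv 1 u x * iteratedDeriv 3 η x
        + iteratedDeriv 2 η x * iteratedDeriv 2 u x) with hF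
  have key : ∀ x : ℝ, HasDerivAt F
      (η x * (-(deriv u x) + a * iteratedDeriv 3 u x - b * iteratedDeriv 5 u x)
        + u x * (-(deriv η x) + a * iteratedDeriv 3 η x - b * iteratedDeriv 5 η x)) x := by
    intro x
    have Dη := fun n => hasDerivAt_iteratedDeriv hη n x
    have Du := fun n => hasDerivAt_iteratedDeriv hu n x
    have h0η : HasDerivAt η (iteratedDeriv 1 η x) x := by
      have := Dη 0; rwa [iteratedDeriv_zero] at this
    have h0u : HasDerivAt u (iteratedDeriv 1 u x) x := by
      have := Du 0; rwa [iteratedDeriv_zero] at this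
    have H : HasDerivAt F
        (-( iteratedDeriv 1 η x * u x + η x * iteratedDeriv 1 u x)
        + a * ((iteratedDeriv 1 η x * iteratedDeriv 2 u x + η x * iteratedDeriv 3 u x)
            + (iteratedDeriv 1 u x * iteratedDeriv 2 η x + u x * iteratedDeriv 3 η x)
            - (iteratedDeriv 2 η x * iteratedDeriv 1 u x
              + iteratedDeriv 1 η x * iteratedDeriv 2 u x))
        - b * ((iteratedDeriv 1 η x * iteratedDeriv 4 u x + η x * iteratedDeriv 5 u x)
            + (iteratedDeriv 1 u x * iteratedDeriv 4 η x + u x * iteratedDeriv 5 η x)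
            - (iteratedDeriv 2 η x * iteratedDeriv 3 u x
              + iteratedDeriv 1 η x * iteratedDeriv 4 u x)
            - (iteratedDeriv 2 u x * iteratedDeriv 3 η x
              + iteratedDeriv 1 u x * iteratedDeriv 4 η x)
            + (iteratedDeriv 3 η x * iteratedDeriv 2 u x
              + iteratedDeriv 2 η x * iteratedDeriv 3 u x))) x := by
      exact ((h0η.mul h0u).neg.add
        ((((h0η.mul (Du 2)).add (h0u.mul (Dη 2))).sub ((Dη 1).mul (Du 1))).const_mul a)).sub
        ((((((h0η.mul (Du 4)).add (h0u.mul (Dη 4))).sub ((Dη 1).mul (Du 3))).sub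
          ((Du 1).mul (Dη 3))).add ((Dη 2).mul (Du 2))).const_mul b)
    convert H using 1
    rw [show deriv u x = iteratedDeriv 1 u x by rw [iteratedDeriv_one],
        show deriv η x = iteratedDeriv 1 η x by rw [iteratedDeriv_one]]
    ring
  have hcont : Continuous (fun x =>
      η x * (-(deriv u x) + a * iteratedDeriv 3 u x - b * iteratedDeriv 5 u x)
        + u x * (-(deriv η x) + a * iteratedDeriv 3 η x - b * iteratedDeriv 5 η x)) := by
    have cη := fun n => hη.continuous_iteratedDeriv n ((by exact_mod_cast le_top))
    have cu := fun n => hu.continuous_iteratedDeriv n ((by exact_mod_cast le_top))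
    have cη1 : Continuous (deriv η) := by
      have := cη 1; rwa [iteratedDeriv_one] at this
    have cu1 : Continuous (deriv u) := by
      have := cu 1; rwa [iteratedDeriv_one] at this
    have cη0 := hη.continuous
    have cu0 := hu.continuous
    have cη3 := cη 3
    have cu3 := cu 3
    have cη5 := cη 5
    have cu5 := cu 5
    fun_prop
  have hint := intervalIntegral.integral_eq_sub_of_hasDerivAt
    (fun x _ => key x) (hcont.intervalIntegrable 0 L)
  have hd1η : iteratedDeriv 1 η 0 = 0 := by rwa [iteratedDeriv_one]
  have hd1ηL : iteratedDeriv 1 η L = 0 := by rwa [iteratedDeriv_one]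
  have hd1u : iteratedDeriv 1 u 0 = 0 := by rwa [iteratedDeriv_one]
  have hd1uL : iteratedDeriv 1 u L = 0 := by rwa [iteratedDeriv_one]
  constructor
  · rw [hint, hF]
    simp only [hη0, hηL, hu0, huL, hd1η, hd1ηL, hd1u, hd1uL]
    have h2u0 : iteratedDeriv 2 u 0 = -(α₁ * iteratedDeriv 2 η 0) := by linarith
    have h2uL : iteratedDeriv 2 u L = α₂ * iteratedDeriv 2 η L := by linarith
    rw [h2u0, h2uL]; ring
  · have h1 := mul_nonneg (mul_nonneg hα₂ hb.le) (sq_nonneg (iteratedDeriv 2 η L))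
    have h2 := mul_nonneg (mul_nonneg hα₁ hb.le) (sq_nonneg (iteratedDeriv 2 η 0))
    linarith
end

section
/- Let a, b > 0, r ≠ 0 and L > 0, and let q(ξ) = b ξ^5 + a ξ^3 + ξ + r, whose five roots consist of one real root and two conjugate pairs of non-real roots. Then there is no Möbius transformation M(z) = (αz + β)/(γz + δ) with M(ξ) = e^{−iLξ} for all five roots ξ of q. -/
open Complex Polynomial Finset Metric Set

lemma key0 (a b r s t : ℝ) (ha : 0 < a) (hb : 0 < b) (hr : r ≠ 0) (ht : t ≠ 0)
    (h1 : 2*a*(s^3-3*s*t^2)+4*s+5*r = 0)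
    (h2 : 2*a*(3*s^2*t-t^3)+4*t = 0)
    (h3 : (6*a^2-20*b)*(s^2-t^2) - 25*b*r*s + 2*a = 0)
    (h4 : (6*a^2-20*b)*(2*s*t) - 25*b*r*t = 0) : False := by
  have e1 : a*t^2 = 3*a*s^2 + 2 := by
    have h2' : t * (2*a*(3*s^2) + 2*a*(-(t^2)) + 4) = 0 := by linear_combination h2
    rcases mul_eq_zero.mp h2' with h | h
    · exact absurd h ht
    · nlinarith [h]
  have e2 : 16*a*s^3 + 8*s - 5*r = 0 := by
    have e2a : a*(16*a*s^3+8*s-5*r) = 0 := by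
      linear_combination (-a)*h1 + (-6*a*s)*e1
    rcases mul_eq_zero.mp e2a with h | h
    · exact absurd h ha.ne'
    · exact h
  have e3 : (12*a^2-40*b)*s - 25*b*r = 0 := by
    have h4' : t * ((12*a^2-40*b)*s - 25*b*r) = 0 := by linear_combination h4
    rcases mul_eq_zero.mp h4' with h | h
    · exact absurd h ht
    · exact h
  by_cases hK : 12*a^2-40*b = 0
  · rw [hK] at e3
    have : b*r = 0 := by linarith
    rcases mul_eq_zero.mp this with h | h
    · exact absurd h hb.ne'
    · exact absurd h hr
  · have hs : s ≠ 0 := by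
      intro h0
      rw [h0] at e3
      simp at e3
      rcases e3 with h | h
      · exact absurd h hb.ne'
      · exact absurd h hr
    have e4 : 2*a*(12*a^2-40*b)*s^2 = 40*b - 10*a^2 := by
      linear_combination (-a)*h3 + (20*b - 6*a^2)*e1 + a*s*e3
    have e5 : s*(80*a*b*(12*a^2-40*b)*s^2 + 40*b*(12*a^2-40*b) - (12*a^2-40*b)^2) = 0 := by
      linear_combination (5*b*(12*a^2-40*b))*e2 + (-(12*a^2-40*b))*e3
    have e5' : 80*a*b*(12*a^2-40*b)*s^2 + 40*b*(12*a^2-40*b) - (12*a^2-40*b)^2 = 0 :=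
      (mul_eq_zero.mp e5).resolve_left hs
    have e6 : (a^2-5*b)*(9*a^2-20*b) = 0 := by
      linear_combination (-1/16 : ℝ)*e5' + (40*b/16)*e4
    rcases mul_eq_zero.mp e6 with h | h
    · -- a^2 = 5b ⇒ K = 4a^2 > 0, RHS = -2a^2 < 0
      nlinarith [e4, sq_nonneg s, mul_pos ha ha, sq_nonneg (a*s)]
    · nlinarith [e4, sq_nonneg s, mul_pos ha ha, sq_nonneg (a*s), mul_pos (mul_pos ha ha) ha]


lemma no_double (a b r : ℝ) (ha : 0 < a) (hb : 0 < b) (hr : r ≠ 0) (ξ : ℂ)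
    (hq : (b:ℂ)*ξ^5 + (a:ℂ)*ξ^3 + ξ + (r:ℂ) = 0)
    (hq' : 5*(b:ℂ)*ξ^4 + 3*(a:ℂ)*ξ^2 + 1 = 0) : False := by
  set s := ξ.re with hs
  set t := ξ.im with htd
  by_cases ht : t = 0
  · have hxi : ξ = (s:ℂ) := Complex.ext rfl (by simp [← htd, ht])
    rw [hxi] at hq'
    have : ((5*b*s^4 + 3*a*s^2 + 1 : ℝ) : ℂ) = 0 := by push_cast; linear_combination hq'
    have h0 : 5*b*s^4 + 3*a*s^2 + 1 = 0 := by exact_mod_cast this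
    nlinarith [sq_nonneg (s^2), sq_nonneg s]
  · have hc : 2*(a:ℂ)*ξ^3 + 4*ξ + 5*(r:ℂ) = 0 := by
      linear_combination 5*hq - ξ*hq'
    have hd : (6*(a:ℂ)^2-20*(b:ℂ))*ξ^2 - 25*(b:ℂ)*(r:ℂ)*ξ + 2*(a:ℂ) = 0 := by
      linear_combination 2*(a:ℂ)*hq' - 5*(b:ℂ)*ξ*hc
    have hxi : ξ = (s:ℂ) + (t:ℂ)*I := by
      rw [hs, htd]; exact (Complex.re_add_im ξ).symm
    rw [hxi] at hc hd
    have h1 : 2*a*(s^3-3*s*t^2)+4*s+5*r = 0 := by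
      have h := congrArg Complex.re hc
      simp [Complex.add_re, Complex.mul_re, Complex.mul_im, pow_succ] at h
      linear_combination h
    have h2 : 2*a*(3*s^2*t-t^3)+4*t = 0 := by
      have h := congrArg Complex.im hc
      simp [Complex.add_im, Complex.mul_re, Complex.mul_im, pow_succ] at h
      linear_combination h
    have h3 : (6*a^2-20*b)*(s^2-t^2) - 25*b*r*s + 2*a = 0 := by
      have h := congrArg Complex.re hd
      simp [Complex.add_re, Complex.sub_re, Complex.mul_re, Complex.mul_im, pow_succ] at h
      linear_combination h
    have h4 : (6*a^2-20*b)*(2*s*t) - 25*b*r*t = 0 := by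
      have h := congrArg Complex.im hd
      simp [Complex.add_im, Complex.sub_im, Complex.mul_re, Complex.mul_im, pow_succ] at h
      linear_combination h
    exact key0 a b r s t ha hb hr ht h1 h2 h3 h4


lemma exists_two_roots (a b r : ℝ) (ha : 0 < a) (hb : 0 < b) (hr : r ≠ 0) :
    ∃ ξ₁ ξ₂ : ℂ, ((b:ℂ)*ξ₁^5 + (a:ℂ)*ξ₁^3 + ξ₁ + (r:ℂ) = 0) ∧
      ((b:ℂ)*ξ₂^5 + (a:ℂ)*ξ₂^3 + ξ₂ + (r:ℂ) = 0) ∧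
      0 < ξ₁.im ∧ 0 < ξ₂.im ∧ ξ₁ ≠ ξ₂ := by
  set P : Polynomial ℂ := C (b:ℂ) * X^5 + C (a:ℂ) * X^3 + X + C (r:ℂ) with hPdef
  have heval : ∀ z : ℂ, P.eval z = b*z^5+a*z^3+z+r := by intro z; simp [hPdef]
  have hdeg : P.natDegree = 5 := by
    rw [hPdef]; compute_degree!; exact_mod_cast hb.ne'
  have hP0 : P ≠ 0 := fun h => by simp [h] at hdeg
  have hsimple : ∀ z : ℂ, P.rootMultiplicity z ≤ 1 := by
    intro z
    by_contra h
    push_neg at h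
    obtain ⟨h1, h2⟩ := (Polynomial.one_lt_rootMultiplicity_iff_isRoot hP0).mp h
    refine no_double a b r ha hb hr z ?_ ?_
    · rw [← heval z]; exact h1
    · have : (derivative P).eval z = 5*b*z^4+3*a*z^2+1 := by simp [hPdef]; ring
      rw [← this]; exact h2
  have hcard : P.roots.card = 5 := by
    rw [← hdeg]
    exact (Polynomial.splits_iff_card_roots.mp (IsAlgClosed.splits P))
  have hnodup : P.roots.Nodup := by
    rw [Multiset.nodup_iff_count_le_one]
    intro z
    rw [Polynomial.count_roots]
    exact hsimple z
  set F : Finset ℂ := P.roots.toFinset with hF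
  have hFcard : F.card = 5 := by
    rw [hF, Multiset.toFinset_card_of_nodup hnodup, hcard]
  have hmem : ∀ z : ℂ, z ∈ F ↔ (b:ℂ)*z^5 + (a:ℂ)*z^3 + z + (r:ℂ) = 0 := by
    intro z
    rw [hF, Multiset.mem_toFinset, Polynomial.mem_roots hP0, Polynomial.IsRoot, heval]
  -- conj closed
  have hconj : ∀ z : ℂ, z ∈ F → (starRingEnd ℂ) z ∈ F := by
    intro z hz
    rw [hmem] at hz ⊢
    have : (starRingEnd ℂ) ((b:ℂ)*z^5 + (a:ℂ)*z^3 + z + (r:ℂ)) = 0 := by rw [hz]; simp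
    simpa [map_add, map_mul, map_pow, Complex.conj_ofReal] using this
  -- at most one real root
  have hreal : ∀ z w : ℂ, z ∈ F → w ∈ F → z.im = 0 → w.im = 0 → z = w := by
    intro z w hz hw hzi hwi
    have hz' : z = ((z.re : ℝ) : ℂ) := Complex.ext rfl (by simp [hzi])
    have hw' : w = ((w.re : ℝ) : ℂ) := Complex.ext rfl (by simp [hwi])
    rw [hmem] at hz hw
    rw [hz'] at hz; rw [hw'] at hw
    have hz2 : b*z.re^5 + a*z.re^3 + z.re + r = 0 := by exact_mod_cast hz
    have hw2 : b*w.re^5 + a*w.re^3 + w.re + r = 0 := by exact_mod_cast hw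
    have hmono : StrictMono (fun x : ℝ => b*x^5 + a*x^3 + x + r) := by
      have h5 : StrictMono (fun x : ℝ => b*x^5) :=
        (Odd.strictMono_pow ⟨2, by norm_num⟩).const_mul hb
      have h3 : StrictMono (fun x : ℝ => a*x^3) :=
        (Odd.strictMono_pow ⟨1, by norm_num⟩).const_mul ha
      exact ((h5.add h3).add strictMono_id).add_const r
    have : z.re = w.re := hmono.injective
      (show b*z.re^5 + a*z.re^3 + z.re + r = b*w.re^5 + a*w.re^3 + w.re + r by linarith)
    rw [hz', hw', this]
  -- counting
  classical
  have h0 : (F.filter (fun z => z.im = 0)).card ≤ 1 := by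
    refine Finset.card_le_one.mpr ?_
    intro z hz w hw
    rw [Finset.mem_filter] at hz hw
    exact hreal z w hz.1 hw.1 hz.2 hw.2
  have hsplit : (F.filter (fun z => z.im = 0)).card
      + (F.filter (fun z => ¬ z.im = 0)).card = 5 := by
    rw [Finset.card_filter_add_card_filter_not]; exact hFcard
  set Fp := F.filter (fun z => 0 < z.im) with hFp
  set Fn := F.filter (fun z => z.im < 0) with hFn
  have hunion : F.filter (fun z => ¬ z.im = 0) = Fp ∪ Fn := by
    ext z
    simp only [hFp, hFn, Finset.mem_filter, Finset.mem_union]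
    constructor
    · rintro ⟨h1, h2⟩
      rcases lt_or_gt_of_ne h2 with h | h
      · exact Or.inr ⟨h1, h⟩
      · exact Or.inl ⟨h1, h⟩
    · rintro (⟨h1, h2⟩ | ⟨h1, h2⟩) <;> exact ⟨h1, by intro h0; rw [h0] at h2; linarith⟩
  have hdisj : Disjoint Fp Fn := by
    rw [Finset.disjoint_left]
    intro z hz hz'
    rw [hFp, Finset.mem_filter] at hz
    rw [hFn, Finset.mem_filter] at hz'
    linarith [hz.2, hz'.2]
  have hneg_le : Fn.card ≤ Fp.card := by
    refine Finset.card_le_card_of_injOn (fun z => (starRingEnd ℂ) z) ?_ ?_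
    · intro z hz
      rw [hFn, Finset.mem_coe, Finset.mem_filter] at hz
      rw [hFp, Finset.mem_coe, Finset.mem_filter]
      refine ⟨hconj z hz.1, ?_⟩
      simp [Complex.conj_im]
      linarith [hz.2]
    · intro x _ y _ h
      exact (starRingEnd ℂ).injective h
  have hcard2 : 2 ≤ Fp.card := by
    have := Finset.card_union_of_disjoint hdisj
    rw [hunion] at hsplit
    omega
  obtain ⟨ξ₁, hξ₁, ξ₂, hξ₂, hne⟩ := Finset.one_lt_card.mp (by omega : 1 < Fp.card)
  rw [hFp, Finset.mem_filter] at hξ₁ hξ₂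
  exact ⟨ξ₁, ξ₂, (hmem ξ₁).mp hξ₁.1, (hmem ξ₂).mp hξ₂.1, hξ₁.2, hξ₂.2, hne⟩


noncomputable def phi (a z : ℂ) : ℂ := (z - a) / (1 - (starRingEnd ℂ) a * z)

lemma nsq_lt {z : ℂ} (h : ‖z‖ < 1) : normSq z < 1 := by
  have : normSq z = ‖z‖^2 := by rw [Complex.normSq_eq_norm_sq]
  rw [this]
  nlinarith [norm_nonneg z]

lemma phi_den_ne {a z : ℂ} (ha : ‖a‖ < 1) (hz : ‖z‖ < 1) :
    1 - (starRingEnd ℂ) a * z ≠ 0 := by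
  intro h
  have h1 : (starRingEnd ℂ) a * z = 1 := by linear_combination -h
  have : ‖(starRingEnd ℂ) a * z‖ < 1 := by
    rw [norm_mul, RCLike.norm_conj]
    nlinarith [norm_nonneg a, norm_nonneg z]
  rw [h1] at this; simp at this

lemma phi_identity (a z : ℂ) :
    normSq (1 - (starRingEnd ℂ) a * z) - normSq (z - a)
      = (1 - normSq a) * (1 - normSq z) := by
  simp only [normSq_apply, Complex.sub_re, Complex.sub_im, Complex.mul_re, Complex.mul_im,
    Complex.conj_re, Complex.conj_im, Complex.one_re, Complex.one_im]
  ring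

lemma phi_maps {a z : ℂ} (ha : ‖a‖ < 1) (hz : ‖z‖ < 1) : ‖phi a z‖ < 1 := by
  have hd := phi_den_ne ha hz
  have hpos : 0 < normSq (1 - (starRingEnd ℂ) a * z) := normSq_pos.mpr hd
  have hkey := phi_identity a z
  have h1 : normSq (z - a) < normSq (1 - (starRingEnd ℂ) a * z) := by
    nlinarith [nsq_lt ha, nsq_lt hz]
  have : normSq (phi a z) < 1 := by
    rw [phi, normSq_div]
    rw [div_lt_one hpos]
    exact h1
  nlinarith [norm_nonneg (phi a z), (Complex.normSq_eq_norm_sq (phi a z)).symm]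

lemma phi_one_sub_ne {a : ℂ} (ha : ‖a‖ < 1) : (1:ℂ) - (starRingEnd ℂ) a * a ≠ 0 := by
  have : (starRingEnd ℂ) a * a = (normSq a : ℂ) := by
    rw [mul_comm, Complex.mul_conj]
  rw [this]
  intro h
  have : ((1 - normSq a : ℝ) : ℂ) = 0 := by push_cast; linear_combination h
  have := Complex.ofReal_eq_zero.mp this
  nlinarith [nsq_lt ha]

lemma phi_leftinv {a z : ℂ} (ha : ‖a‖ < 1) (hz : ‖z‖ < 1) :
    phi (-a) (phi a z) = z := by
  have hd := phi_den_ne ha hz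
  have h2 := phi_one_sub_ne ha
  have e1 : 1 - (starRingEnd ℂ) (-a) * phi a z
      = (1 - (starRingEnd ℂ) a * a) / (1 - (starRingEnd ℂ) a * z) := by
    rw [phi, map_neg]
    field_simp
    ring
  have e2 : phi a z - (-a)
      = z * (1 - (starRingEnd ℂ) a * a) / (1 - (starRingEnd ℂ) a * z) := by
    rw [phi, eq_div_iff hd, sub_mul, div_mul_cancel₀ _ hd]
    ring
  rw [phi, e1, e2, mul_div_assoc]
  exact mul_div_cancel_right₀ z (div_ne_zero h2 hd)

lemma phi_inj {a x y : ℂ} (ha : ‖a‖ < 1) (hx : ‖x‖ < 1) (hy : ‖y‖ < 1)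
    (h : phi a x = phi a y) : x = y := by
  rw [phi, phi, div_eq_div_iff (phi_den_ne ha hx) (phi_den_ne ha hy)] at h
  have h3 : (x - y) * (1 - (starRingEnd ℂ) a * a) = 0 := by linear_combination h
  rcases mul_eq_zero.mp h3 with h4 | h4
  · linear_combination h4
  · exact absurd h4 (phi_one_sub_ne ha)

lemma phi_self (a : ℂ) : phi a a = 0 := by simp [phi]

lemma phi_zero (a : ℂ) : phi a 0 = -a / 1 := by simp [phi]

lemma phi_diffOn {a : ℂ} (ha : ‖a‖ < 1) :
    DifferentiableOn ℂ (phi a) (ball (0:ℂ) 1) := by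
  intro z hz
  rw [mem_ball_zero_iff] at hz
  apply DifferentiableAt.differentiableWithinAt
  apply DifferentiableAt.div
  · fun_prop
  · fun_prop
  · exact phi_den_ne ha hz

lemma rigidity {g : ℂ → ℂ} (hd : DifferentiableOn ℂ g (ball (0:ℂ) 1))
    (hm : MapsTo g (ball (0:ℂ) 1) (ball (0:ℂ) 1))
    {w₁ w₂ : ℂ} (h1 : w₁ ∈ ball (0:ℂ) 1) (h2 : w₂ ∈ ball (0:ℂ) 1)
    (hne : w₁ ≠ w₂) (f1 : g w₁ = w₁) (f2 : g w₂ = w₂) : g 0 = 0 := by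
  rw [mem_ball_zero_iff] at h1 h2
  have hn1 : ‖-w₁‖ < 1 := by rwa [norm_neg]
  -- h = phi w₁ ∘ g ∘ phi (-w₁)
  set h : ℂ → ℂ := fun w => phi w₁ (g (phi (-w₁) w)) with hhdef
  have hmem : ∀ w : ℂ, w ∈ ball (0:ℂ) 1 → ‖w‖ < 1 := fun w hw => mem_ball_zero_iff.mp hw
  have hmaps1 : ∀ w : ℂ, ‖w‖ < 1 → ‖phi (-w₁) w‖ < 1 := fun w hw => phi_maps hn1 hw
  have hg_in : ∀ w : ℂ, ‖w‖ < 1 → ‖g (phi (-w₁) w)‖ < 1 := by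
    intro w hw
    exact hmem _ (hm (mem_ball_zero_iff.mpr (hmaps1 w hw)))
  have hmapsh : MapsTo h (ball (0:ℂ) 1) (ball (0:ℂ) 1) := by
    intro w hw
    rw [mem_ball_zero_iff] at hw ⊢
    exact phi_maps h1 (hg_in w hw)
  have hph : ∀ w : ℂ, ‖w‖ < 1 → phi (-w₁) w ∈ ball (0:ℂ) 1 :=
    fun w hw => mem_ball_zero_iff.mpr (hmaps1 w hw)
  have hdh : DifferentiableOn ℂ h (ball (0:ℂ) 1) := by
    apply DifferentiableOn.comp (phi_diffOn h1)
    · apply DifferentiableOn.comp hd (phi_diffOn hn1)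
      intro w hw
      exact hph w (hmem w hw)
    · intro w hw
      exact mem_ball_zero_iff.mpr (hg_in w (hmem w hw))
  have hphi_neg_zero : phi (-w₁) 0 = w₁ := by simp [phi]
  have hh0 : h 0 = 0 := by
    rw [hhdef]
    simp only [hphi_neg_zero, f1, phi_self]
  set c : ℂ := phi w₁ w₂ with hcdef
  have hc_in : c ∈ ball (0:ℂ) 1 := mem_ball_zero_iff.mpr (phi_maps h1 h2)
  have hc_ne : c ≠ 0 := by
    rw [hcdef, phi, div_ne_zero_iff]
    exact ⟨sub_ne_zero.mpr (Ne.symm hne), phi_den_ne h1 h2⟩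
  have hhc : h c = c := by
    rw [hhdef]
    simp only [hcdef]
    rw [show phi (-w₁) (phi w₁ w₂) = w₂ from by
      have := phi_leftinv h1 h2; exact this]
    rw [f2]
  have hslope : dslope h 0 c = 1 := by
    rw [dslope_of_ne h hc_ne]
    rw [slope_def_field, hhc, hh0]
    simp only [sub_zero]
    exact div_self hc_ne
  have heq := Complex.affine_of_mapsTo_ball_of_exists_norm_dslope_eq_div
    (f := h) (c := 0) (R₁ := 1) (R₂ := 1) hdh
    (by rw [hh0]; exact hmapsh.mono_right ball_subset_closedBall) hc_in (by rw [hslope]; norm_num)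
  have hgz : ‖g 0‖ < 1 := mem_ball_zero_iff.mp (hm (by simp))
  have hval := heq (mem_ball_zero_iff.mpr hn1)
  simp only [hh0, hslope, sub_zero, smul_eq_mul, mul_one, zero_add] at hval
  -- hval : h (-w₁) = -w₁
  have hphi_neg_self : phi (-w₁) (-w₁) = 0 := phi_self (-w₁)
  rw [hhdef] at hval
  simp only [hphi_neg_self] at hval
  -- hval : phi w₁ (g 0) = -w₁
  have hzero : phi w₁ 0 = -w₁ := by simp [phi]
  have : phi w₁ (g 0) = phi w₁ 0 := by rw [hval, hzero]
  exact phi_inj h1 hgz (by simp) this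



/-- For `a, b > 0`, `r ≠ 0` and any `L > 0`, there is no Möbius transformation
`M(z) = (αz+β)/(γz+δ)` (`αδ - βγ ≠ 0`) with `M(ξ) = e^{-iLξ}` at every root `ξ`
of `q(ξ) = bξ⁵ + aξ³ + ξ + r`. -/
theorem stmt19 (a b r L : ℝ) (ha : 0 < a) (hb : 0 < b) (hr : r ≠ 0)
    (hL : 0 < L) :
    ¬ ∃ α β γ δ : ℂ, α * δ - β * γ ≠ 0 ∧
      ∀ ξ : ℂ, (b : ℂ) * ξ ^ 5 + (a : ℂ) * ξ ^ 3 + ξ + (r : ℂ) = 0 →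
        γ * ξ + δ ≠ 0 ∧
        (α * ξ + β) / (γ * ξ + δ) = Complex.exp (-Complex.I * L * ξ) := by
  rintro ⟨α, β, γ, δ, hdet, H⟩
  obtain ⟨ξ₁, ξ₂, hq1, hq2, hy1, hy2, hne⟩ := exists_two_roots a b r ha hb hr
  -- conjugate of a root is a root
  have hconjroot : ∀ ξ : ℂ, ((b:ℂ)*ξ^5 + (a:ℂ)*ξ^3 + ξ + (r:ℂ) = 0) →
      ((b:ℂ)*((starRingEnd ℂ) ξ)^5 + (a:ℂ)*((starRingEnd ℂ) ξ)^3
        + (starRingEnd ℂ) ξ + (r:ℂ) = 0) := by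
    intro ξ h
    have := congrArg (starRingEnd ℂ) h
    simpa [map_add, map_mul, map_pow, Complex.conj_ofReal] using this
  -- Möbius equations at roots, cleared of denominators
  have hM : ∀ ξ : ℂ, ((b:ℂ)*ξ^5 + (a:ℂ)*ξ^3 + ξ + (r:ℂ) = 0) →
      α*ξ + β = Complex.exp (-Complex.I*L*ξ) * (γ*ξ + δ) := by
    intro ξ h
    obtain ⟨hd0, he⟩ := H ξ h
    rw [div_eq_iff hd0, show -I*(L:ℂ)*ξ = -(I*(L:ℂ)*ξ) by ring] at he
    rw [show -I*(L:ℂ)*ξ = -(I*(L:ℂ)*ξ) by ring]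
    exact he
  -- conjugated Möbius equations
  have hMc : ∀ ξ : ℂ, ((b:ℂ)*ξ^5 + (a:ℂ)*ξ^3 + ξ + (r:ℂ) = 0) →
      (starRingEnd ℂ) α * ξ + (starRingEnd ℂ) β
        = Complex.exp (Complex.I*L*ξ) * ((starRingEnd ℂ) γ * ξ + (starRingEnd ℂ) δ) := by
    intro ξ h
    have h2 := hM _ (hconjroot ξ h)
    have h3 := congrArg (starRingEnd ℂ) h2
    simp only [map_add, map_mul, Complex.conj_conj] at h3
    rw [← Complex.exp_conj] at h3
    rw [show (starRingEnd ℂ) (-I*(L:ℂ)*((starRingEnd ℂ) ξ)) = I*(L:ℂ)*ξ from by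
      simp [map_mul, map_neg, Complex.conj_I, Complex.conj_ofReal]] at h3
    exact h3
  have hexp1 : ∀ ξ : ℂ, Complex.exp (-I*(L:ℂ)*ξ) * Complex.exp (I*(L:ℂ)*ξ) = 1 := by
    intro ξ
    rw [← Complex.exp_add, show -I*(L:ℂ)*ξ + I*(L:ℂ)*ξ = 0 by ring, Complex.exp_zero]
  -- the quadratic vanishes at all roots
  have hquad : ∀ ξ : ℂ, ((b:ℂ)*ξ^5 + (a:ℂ)*ξ^3 + ξ + (r:ℂ) = 0) →
      (α*(starRingEnd ℂ) α - γ*(starRingEnd ℂ) γ)*ξ^2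
        + (α*(starRingEnd ℂ) β + β*(starRingEnd ℂ) α - γ*(starRingEnd ℂ) δ - δ*(starRingEnd ℂ) γ)*ξ
        + (β*(starRingEnd ℂ) β - δ*(starRingEnd ℂ) δ) = 0 := by
    intro ξ h
    have e1 := hM ξ h
    have e2 := hMc ξ h
    linear_combination ((starRingEnd ℂ) α*ξ + (starRingEnd ℂ) β)*e1
      + (Complex.exp (-I*(L:ℂ)*ξ)*(γ*ξ+δ))*e2
      + ((γ*ξ+δ)*((starRingEnd ℂ) γ*ξ + (starRingEnd ℂ) δ))*(hexp1 ξ)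
  -- three distinct roots kill the quadratic
  have hne12 : ξ₁ ≠ (starRingEnd ℂ) ξ₁ := by
    intro h
    have := congrArg Complex.im h
    simp only [Complex.conj_im] at this
    linarith
  have hne23 : (starRingEnd ℂ) ξ₁ ≠ ξ₂ := by
    intro h
    have := congrArg Complex.im h
    simp only [Complex.conj_im] at this
    linarith
  have e1 := hquad ξ₁ hq1
  have e2 := hquad ((starRingEnd ℂ) ξ₁) (hconjroot ξ₁ hq1)
  have e3 := hquad ξ₂ hq2
  set A := α*(starRingEnd ℂ) α - γ*(starRingEnd ℂ) γ with hAdef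
  set B := α*(starRingEnd ℂ) β + β*(starRingEnd ℂ) α - γ*(starRingEnd ℂ) δ - δ*(starRingEnd ℂ) γ with hBdef
  set Cc := β*(starRingEnd ℂ) β - δ*(starRingEnd ℂ) δ with hCdef
  have f12 : A*(ξ₁ + (starRingEnd ℂ) ξ₁) + B = 0 := by
    have h0 : (ξ₁ - (starRingEnd ℂ) ξ₁) * (A*(ξ₁ + (starRingEnd ℂ) ξ₁) + B) = 0 := by
      linear_combination e1 - e2
    exact (mul_eq_zero.mp h0).resolve_left (sub_ne_zero.mpr hne12)
  have f13 : A*(ξ₁ + ξ₂) + B = 0 := by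
    have h0 : (ξ₁ - ξ₂) * (A*(ξ₁ + ξ₂) + B) = 0 := by
      linear_combination e1 - e3
    exact (mul_eq_zero.mp h0).resolve_left (sub_ne_zero.mpr hne)
  have hA : A = 0 := by
    have h0 : ((starRingEnd ℂ) ξ₁ - ξ₂) * A = 0 := by linear_combination f12 - f13
    exact (mul_eq_zero.mp h0).resolve_left (sub_ne_zero.mpr hne23)
  have hB : B = 0 := by linear_combination f12 - (ξ₁ + (starRingEnd ℂ) ξ₁)*hA
  have hC : Cc = 0 := by linear_combination e1 - ξ₁^2*hA - ξ₁*hB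
  rw [hAdef] at hA; rw [hBdef] at hB; rw [hCdef] at hC
  -- γ ≠ 0 and α ≠ 0
  have hγ : γ ≠ 0 := by
    intro h0
    rw [h0] at hA
    simp only [zero_mul, mul_zero, sub_zero] at hA
    rw [Complex.mul_conj] at hA
    have : α = 0 := Complex.normSq_eq_zero.mp (by exact_mod_cast hA)
    rw [this, h0] at hdet
    simp at hdet
  have hα : α ≠ 0 := by
    intro h0
    rw [h0] at hA
    simp only [zero_mul, mul_zero, zero_sub, neg_eq_zero] at hA
    rw [Complex.mul_conj] at hA
    have : γ = 0 := Complex.normSq_eq_zero.mp (by exact_mod_cast hA)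
    rw [this, h0] at hdet
    simp at hdet
  have hcγ : (starRingEnd ℂ) γ ≠ 0 := by
    simpa using hγ
  -- the symmetry relation
  have hstar : α * (starRingEnd ℂ) δ - β * (starRingEnd ℂ) γ = 0 := by
    have h0 : (α*δ - β*γ) * (α*(starRingEnd ℂ) δ - β*(starRingEnd ℂ) γ) = 0 := by
      linear_combination (-(α^2))*hC + (α*β)*hB + (-(β^2))*hA
    exact (mul_eq_zero.mp h0).resolve_left hdet
  -- the pole
  set p : ℂ := -δ/γ with hpdef
  have hδ : δ = -γ*p := by rw [hpdef]; field_simp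
  have hβ : β = -α * (starRingEnd ℂ) p := by
    rw [hpdef, map_div₀, map_neg]
    rw [show (-α : ℂ) * (-(starRingEnd ℂ) δ / (starRingEnd ℂ) γ)
        = α * (starRingEnd ℂ) δ / (starRingEnd ℂ) γ from by ring, eq_div_iff hcγ]
    linear_combination -hstar
  have hnormsq : normSq α = normSq γ := by
    have : α*(starRingEnd ℂ) α = γ*(starRingEnd ℂ) γ := by linear_combination hA
    rw [Complex.mul_conj, Complex.mul_conj] at this
    exact_mod_cast this
  have habs : ‖α‖ = ‖γ‖ := by
    rw [Complex.norm_def, Complex.norm_def, hnormsq]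
  -- Im p > 0
  have hids : ∀ z : ℂ, normSq (z - (starRingEnd ℂ) p) - normSq (z - p) = 4*z.im*p.im := by
    intro z
    simp only [normSq_apply, Complex.sub_re, Complex.sub_im, Complex.conj_re, Complex.conj_im]
    ring
  have hEabs : ∀ ξ : ℂ, ‖Complex.exp (-I*(L:ℂ)*ξ)‖ = Real.exp (L * ξ.im) := by
    intro ξ
    rw [Complex.norm_exp]
    congr 1
    simp [Complex.mul_re, Complex.mul_im]
  have hrooteq : ∀ ξ : ℂ, ((b:ℂ)*ξ^5 + (a:ℂ)*ξ^3 + ξ + (r:ℂ) = 0) →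
      α*(ξ - (starRingEnd ℂ) p) = Complex.exp (-I*(L:ℂ)*ξ) * (γ*(ξ - p)) := by
    intro ξ h
    have e := hM ξ h
    rw [hβ, hδ] at e
    linear_combination e
  have hnorm1 : ‖γ‖ * ‖ξ₁ - (starRingEnd ℂ) p‖
      = Real.exp (L*ξ₁.im) * (‖γ‖ * ‖ξ₁ - p‖) := by
    have h0 := congrArg norm (hrooteq ξ₁ hq1)
    rw [norm_mul, norm_mul, norm_mul, hEabs, habs] at h0
    exact h0
  have hγabs : 0 < ‖γ‖ := by
    simpa using (norm_pos_iff.mpr hγ)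
  have hK1 : (1:ℝ) < Real.exp (L*ξ₁.im) := by
    rw [Real.one_lt_exp_iff]
    positivity
  have hxp : ξ₁ ≠ p := by
    intro h0
    rw [← h0] at hnorm1
    simp only [sub_self, norm_zero, mul_zero] at hnorm1
    rcases mul_eq_zero.mp hnorm1 with h | h
    · exact hγ (norm_eq_zero.mp h)
    · exact hne12 (sub_eq_zero.mp (by simpa using h))
  have hpim : 0 < p.im := by
    have hsq : normSq (ξ₁ - (starRingEnd ℂ) p)
        = (Real.exp (L*ξ₁.im))^2 * normSq (ξ₁ - p) := by
      have h1 : ‖ξ₁ - (starRingEnd ℂ) p‖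
          = Real.exp (L*ξ₁.im) * ‖ξ₁ - p‖ := by
        refine mul_left_cancel₀ (ne_of_gt hγabs) ?_
        linear_combination hnorm1
      have h2 := congrArg (fun x : ℝ => x^2) h1
      simp only [mul_pow] at h2
      rw [← Complex.sq_norm, ← Complex.sq_norm]
      linarith [h2]
    have hpos : 0 < normSq (ξ₁ - p) := normSq_pos.mpr (sub_ne_zero.mpr hxp)
    have hid := hids ξ₁
    have hK2 : 0 < (Real.exp (L*ξ₁.im))^2 - 1 := by nlinarith [hK1]
    have h5 : 0 < ((Real.exp (L*ξ₁.im))^2 - 1) * normSq (ξ₁ - p) := mul_pos hK2 hpos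
    have h6 : 0 < 4*ξ₁.im*p.im := by nlinarith [hsq, hid, h5]
    by_contra hcon
    push_neg at hcon
    nlinarith [mul_nonneg hy1.le (neg_nonneg.mpr hcon), h6]
  -- denominators ξ - conj p are nonzero
  have hden : ∀ ξ : ℂ, 0 < ξ.im → ξ - (starRingEnd ℂ) p ≠ 0 := by
    intro ξ hξ h0
    have := congrArg Complex.im h0
    simp only [Complex.sub_im, Complex.conj_im, Complex.zero_im] at this
    linarith
  set w₁ : ℂ := (ξ₁ - p)/(ξ₁ - (starRingEnd ℂ) p) with hw1def
  set w₂ : ℂ := (ξ₂ - p)/(ξ₂ - (starRingEnd ℂ) p) with hw2def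
  have hwlt : ∀ ξ : ℂ, 0 < ξ.im → ‖(ξ - p)/(ξ - (starRingEnd ℂ) p)‖ < 1 := by
    intro ξ hξ
    have hd := hden ξ hξ
    have hsqlt : normSq (ξ - p) < normSq (ξ - (starRingEnd ℂ) p) := by
      have := hids ξ
      nlinarith [mul_pos hξ hpim]
    rw [norm_div, div_lt_one (by simpa [norm_pos_iff] using hd)]
    have h1 := Complex.sq_norm (ξ - p)
    have h2 := Complex.sq_norm (ξ - (starRingEnd ℂ) p)
    nlinarith [norm_nonneg (ξ - p), norm_nonneg (ξ - (starRingEnd ℂ) p)]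
  have hw1in : w₁ ∈ ball (0:ℂ) 1 := mem_ball_zero_iff.mpr (hwlt ξ₁ hy1)
  have hw2in : w₂ ∈ ball (0:ℂ) 1 := mem_ball_zero_iff.mpr (hwlt ξ₂ hy2)
  -- the holomorphic self-map of the disk
  set g : ℂ → ℂ := fun w =>
    (α/γ) * Complex.exp (I*(L:ℂ)*((p - (starRingEnd ℂ) p * w)/(1 - w))) with hgdef
  have h1w : ∀ w : ℂ, ‖w‖ < 1 → (1:ℂ) - w ≠ 0 := by
    intro w hw h0
    have : w = 1 := by linear_combination -h0
    rw [this] at hw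
    simp at hw
  have him_pos : ∀ w : ℂ, ‖w‖ < 1 → 0 < ((p - (starRingEnd ℂ) p * w)/(1 - w)).im := by
    intro w hw
    have hd := h1w w hw
    have hN : 0 < normSq (1 - w) := normSq_pos.mpr hd
    have hkey : (p - (starRingEnd ℂ) p * w).im*(1-w).re
        - (p - (starRingEnd ℂ) p * w).re*(1-w).im = (1 - normSq w)*p.im := by
      simp only [normSq_apply, Complex.mul_re, Complex.mul_im, Complex.sub_re,
        Complex.sub_im, Complex.conj_re, Complex.conj_im, Complex.one_re, Complex.one_im]
      ring
    rw [Complex.div_im, div_sub_div_same]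
    apply div_pos
    · rw [hkey]
      exact mul_pos (by nlinarith [nsq_lt hw]) hpim
    · exact hN
  have habs_ratio : ‖α/γ‖ = 1 := by
    rw [norm_div, habs, div_self (ne_of_gt hγabs)]
  have hgmaps : MapsTo g (ball (0:ℂ) 1) (ball (0:ℂ) 1) := by
    intro w hw
    rw [mem_ball_zero_iff] at hw ⊢
    rw [hgdef]
    simp only []
    rw [norm_mul, habs_ratio, one_mul,
      Complex.norm_exp]
    rw [Real.exp_lt_one_iff]
    have him := him_pos w hw
    have : (I*(L:ℂ)*((p - (starRingEnd ℂ) p * w)/(1 - w))).re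
        = -(L * ((p - (starRingEnd ℂ) p * w)/(1 - w)).im) := by
      simp [Complex.mul_re, Complex.mul_im]
    rw [this]
    have : 0 < L * ((p - (starRingEnd ℂ) p * w)/(1 - w)).im := mul_pos hL him
    linarith
  have hgdiff : DifferentiableOn ℂ g (ball (0:ℂ) 1) := by
    intro w hw
    apply DifferentiableAt.differentiableWithinAt
    have hd := h1w w (mem_ball_zero_iff.mp hw)
    rw [hgdef]
    apply DifferentiableAt.const_mul
    apply DifferentiableAt.cexp
    apply DifferentiableAt.const_mul
    exact DifferentiableAt.div
      ((differentiableAt_const _).sub ((differentiableAt_const _).mul differentiableAt_id))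
      ((differentiableAt_const _).sub differentiableAt_id) hd
  -- fixed points
  have hfix : ∀ ξ : ℂ, 0 < ξ.im → ((b:ℂ)*ξ^5 + (a:ℂ)*ξ^3 + ξ + (r:ℂ) = 0) →
      g ((ξ - p)/(ξ - (starRingEnd ℂ) p)) = (ξ - p)/(ξ - (starRingEnd ℂ) p) := by
    intro ξ hξ hroot
    have hd1 := hden ξ hξ
    have hd2 : (1:ℂ) - (ξ - p)/(ξ - (starRingEnd ℂ) p) ≠ 0 := h1w _ (hwlt ξ hξ)
    have hnum : p - (starRingEnd ℂ) p * ((ξ - p)/(ξ - (starRingEnd ℂ) p))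
        = ξ * (1 - (ξ - p)/(ξ - (starRingEnd ℂ) p)) := by
      field_simp
      ring
    have hT : (p - (starRingEnd ℂ) p * ((ξ - p)/(ξ - (starRingEnd ℂ) p)))
        /(1 - (ξ - p)/(ξ - (starRingEnd ℂ) p)) = ξ := by
      rw [hnum, mul_div_assoc, div_self hd2, mul_one]
    rw [hgdef]
    simp only []
    rw [hT]
    rw [div_mul_eq_mul_div, div_eq_div_iff hγ hd1]
    linear_combination Complex.exp (I*(L:ℂ)*ξ)*(hrooteq ξ hroot) + γ*(ξ-p)*(hexp1 ξ)
  have hwne : w₁ ≠ w₂ := by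
    intro h
    rw [hw1def, hw2def, div_eq_div_iff (hden ξ₁ hy1) (hden ξ₂ hy2)] at h
    have h0 : (ξ₁ - ξ₂)*(p - (starRingEnd ℂ) p) = 0 := by linear_combination h
    rcases mul_eq_zero.mp h0 with h | h
    · exact hne (by linear_combination h)
    · have := congrArg Complex.im h
      simp only [Complex.sub_im, Complex.conj_im, Complex.zero_im] at this
      linarith
  have hg0 := rigidity hgdiff hgmaps hw1in hw2in hwne
    (hfix ξ₁ hy1 hq1) (hfix ξ₂ hy2 hq2)
  rw [hgdef] at hg0
  simp only [mul_zero, sub_zero, div_one] at hg0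
  rcases mul_eq_zero.mp hg0 with h | h
  · rcases div_eq_zero_iff.mp h with h' | h'
    · exact hα h'
    · exact hγ h'
  · exact Complex.exp_ne_zero _ h
end
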